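/- For the map Θ sending an ordered forest F of degree n to the sum of all permutations σ ∈ S_n such that i ↠ j in F implies σ⁻¹(i) ≥ σ⁻¹(j), one has for all ordered forests F, G: ⟨Θ(F), Θ(G)⟩_FQSym = ⟨F, G⟩, where ⟨σ,τ⟩_FQSym = δ_{σ⁻¹,τ} and ⟨F,G⟩ = |S(F,G)|. That is, Θ is an isometry for the pairings. -/
import Mathlib


def ParentRel {n : ℕ} (p : Fin n → Option (Fin n)) (a b : Fin n) : Prop :=
  p a = some b

def IsForest {n : ℕ} (p : Fin n → Option (Fin n)) : Prop :=
  ∀ v, ¬ Relation.TransGen (ParentRel p) v v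

def Reaches {n : ℕ} (p : Fin n → Option (Fin n)) (v w : Fin n) : Prop :=
  Relation.ReflTransGen (ParentRel p) v w

/-- `S_F` : permutations `σ` with `i ↠ j` in `F` ⟹ `σ⁻¹(i) ≥ σ⁻¹(j)`. -/
def SF {n : ℕ} (F : Fin n → Option (Fin n)) : Set (Equiv.Perm (Fin n)) :=
  {σ | ∀ i j, Reaches F i j → σ⁻¹ j ≤ σ⁻¹ i}

/-- `S(F,G)` : bijections decreasing along `F` and with inverse decreasing
along `G`. -/
def SFG {n : ℕ} (F G : Fin n → Option (Fin n)) : Set (Equiv.Perm (Fin n)) :=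
  {f | (∀ x y, Reaches F x y → f y ≤ f x) ∧ (∀ x y, Reaches G (f x) (f y) → y ≤ x)}

open Classical in
/-- `Θ(F) = Σ_{σ ∈ S_F} σ`, as an element of the group algebra of `S_n`
(written as its coefficient function). -/
noncomputable def Theta {n : ℕ} (F : Fin n → Option (Fin n)) :
    Equiv.Perm (Fin n) → ℚ :=
  fun σ => if σ ∈ SF F then 1 else 0

/-- `Θ` is an isometry: `⟨Θ(F), Θ(G)⟩_FQSym = ⟨F,G⟩ = |S(F,G)|`, where the
`FQSym` pairing is `⟨σ,τ⟩ = δ_{σ⁻¹,τ}` extended bilinearly. -/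
theorem Theta_isometry {n : ℕ} (F G : Fin n → Option (Fin n))
    (hF : IsForest F) (hG : IsForest G) :
    ∑ σ : Equiv.Perm (Fin n), Theta F σ * Theta G σ⁻¹ = (Nat.card (SFG F G) : ℚ) := by
  classical
  have key : ∀ σ : Equiv.Perm (Fin n), (σ ∈ SF F ∧ σ⁻¹ ∈ SF G) ↔ σ⁻¹ ∈ SFG F G := by
    intro σ
    constructor
    · rintro ⟨h1, h2⟩
      refine ⟨fun x y h => h1 x y h, fun x y h => ?_⟩
      have := h2 _ _ h
      simpa using this
    · rintro ⟨h1, h2⟩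
      refine ⟨fun i j h => h1 i j h, fun i j h => ?_⟩
      have := h2 (σ i) (σ j) (by simpa using h)
      simpa using this
  have step1 : ∀ σ : Equiv.Perm (Fin n), Theta F σ * Theta G σ⁻¹ =
      if σ⁻¹ ∈ SFG F G then (1 : ℚ) else 0 := by
    intro σ
    simp only [Theta, ite_mul, one_mul, zero_mul, mul_ite, mul_one, mul_zero]
    by_cases h1 : σ ∈ SF F <;> by_cases h2 : σ⁻¹ ∈ SF G <;>
      simp [h1, h2, ← key σ]
  rw [Finset.sum_congr rfl (fun σ _ => step1 σ)]
  rw [Fintype.sum_equiv (Equiv.inv (Equiv.Perm (Fin n)))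
      (fun σ => if σ⁻¹ ∈ SFG F G then (1 : ℚ) else 0)
      (fun σ => if σ ∈ SFG F G then (1 : ℚ) else 0) (fun σ => rfl)]
  rw [Nat.card_eq_card_toFinset]
  have hfin : (SFG F G).toFinset = Finset.univ.filter (· ∈ SFG F G) := by
    ext x; simp
  rw [hfin, Finset.card_filter]
  push_cast
  simp [apply_ite (Nat.cast : ℕ → ℚ)]
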